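/- arXiv:2007.13743 — 4 statements merged into one kernel-verified Lean document; each statement's English description precedes it below -/
import Mathlib

section
/- If a (v,k,λ) directed design 𝒟 = (V,𝔅) contains m mutually disjoint directed trades (i.e., m directed trades T¹,…,Tᵐ contained in 𝒟 whose first collections T₁¹,…,T₁ᵐ are pairwise disjoint subcollections of 𝔅), then every defining set of 𝒟 contains at least m blocks; in particular the smallest defining set of 𝒟 has at least m blocks. -/
/-- `B` is the block collection of a `(v,k,λ)` directed design on `Fin v`:
blocks are ordered `k`-tuples of distinct points, and every ordered pair of
distinct points appears (in order) in exactly `lam` blocks.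
(An ordered pair `(x,y)` appears in a block iff `[x,y]` is a sublist of it.) -/
def IsDirectedDesign (v k lam : ℕ) (B : Multiset (List (Fin v))) : Prop :=
  (∀ b ∈ B, b.length = k ∧ b.Nodup) ∧
  ∀ x y : Fin v, x ≠ y →
    Multiset.countP (fun b => [x, y].Sublist b) B = lam

/-- A block collection is super-simple if any two of its blocks (counted with
multiplicity) share at most two points. -/
def SuperSimple (v : ℕ) (B : Multiset (List (Fin v))) : Prop :=
  ∀ b₁ b₂ : List (Fin v), ({b₁, b₂} : Multiset (List (Fin v))) ≤ B →
    (b₁.toFinset ∩ b₂.toFinset).card ≤ 2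

/-- `S` is a defining set of the `(v,k,λ)` directed design `B`: it is a
subcollection of `B`, and `B` is the unique `(v,k,λ)` directed design whose
block collection contains `S`. -/
def IsDefiningSet (v k lam : ℕ) (B S : Multiset (List (Fin v))) : Prop :=
  S ≤ B ∧ ∀ B' : Multiset (List (Fin v)),
    IsDirectedDesign v k lam B' → S ≤ B' → B' = B

/-- `d ≥ 1/2`: every defining set of `B` (in particular a smallest one)
contains at least half of its blocks. -/
def DefiningSetsAtLeastHalf (v k lam : ℕ) (B : Multiset (List (Fin v))) : Prop :=
  ∀ S : Multiset (List (Fin v)), IsDefiningSet v k lam B S →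
    Multiset.card B ≤ 2 * Multiset.card S

/-- `T = T₁ - T₂` is a `(v,k,t)` directed trade: `T₁` and `T₂` are disjoint
nonempty collections of ordered `k`-tuples of distinct points, of equal size
(the volume), and every ordered `t`-tuple of distinct points is covered by the
same number of blocks of `T₁` as of `T₂`. -/
def IsDirectedTrade (v k t : ℕ) (T₁ T₂ : Multiset (List (Fin v))) : Prop :=
  T₁ ≠ 0 ∧ (∀ b ∈ T₁, b ∉ T₂) ∧ Multiset.card T₁ = Multiset.card T₂ ∧
  (∀ b ∈ T₁ + T₂, b.length = k ∧ b.Nodup) ∧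
  ∀ p : List (Fin v), p.length = t → p.Nodup →
    Multiset.countP (fun b => p.Sublist b) T₁ =
      Multiset.countP (fun b => p.Sublist b) T₂

/-- If a `(v,k,λ)` directed design `B` contains `m` mutually disjoint directed
trades (trades `Tone i - Ttwo i` whose first collections are pairwise disjoint
subcollections of `B`), then every defining set of `B` has at least `m`
blocks; in particular a smallest defining set has at least `m` blocks. -/
theorem definingSet_card_ge_of_disjoint_trades (v k lam m : ℕ)
    (B : Multiset (List (Fin v))) (hB : IsDirectedDesign v k lam B)
    (Tone Ttwo : Fin m → Multiset (List (Fin v)))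
    (htrade : ∀ i, IsDirectedTrade v k 2 (Tone i) (Ttwo i))
    (hsub : ∀ i, Tone i ≤ B)
    (hdisj : ∀ i j, i ≠ j → ∀ b ∈ Tone i, b ∉ Tone j) :
    ∀ S : Multiset (List (Fin v)), IsDefiningSet v k lam B S →
      m ≤ Multiset.card S := by
  rintro S ⟨hSB, huniq⟩
  have key : ∀ i, ∃ b, b ∈ S ∧ b ∈ Tone i := by
    intro i
    by_contra h
    push_neg at h
    obtain ⟨hne, hdisj12, hcard, hmem, hcover⟩ := htrade i
    -- S ≤ B - Tone i
    have hS' : S ≤ B - Tone i := by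
      rw [Multiset.le_iff_count]
      intro b
      rw [Multiset.count_sub]
      by_cases hb : b ∈ S
      · have : Multiset.count b (Tone i) = 0 :=
          Multiset.count_eq_zero.mpr (h b hb)
        rw [this]
        simpa using Multiset.le_iff_count.mp hSB b
      · simp [Multiset.count_eq_zero.mpr hb]
    set B' : Multiset (List (Fin v)) := B - Tone i + Ttwo i with hB'def
    have hcancel : B - Tone i + Tone i = B := tsub_add_cancel_of_le (hsub i)
    have hdesign : IsDirectedDesign v k lam B' := by
      constructor
      · intro b hb
        rw [hB'def, Multiset.mem_add] at hb
        rcases hb with hb | hb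
        · exact hB.1 b (Multiset.mem_of_le tsub_le_self hb)
        · exact hmem b (Multiset.mem_add.mpr (Or.inr hb))
      · intro x y hxy
        have hpair : Multiset.countP (fun b => [x, y].Sublist b) (Tone i) =
            Multiset.countP (fun b => [x, y].Sublist b) (Ttwo i) := by
          apply hcover
          · simp
          · simp [hxy]
        have hBcount : Multiset.countP (fun b => [x, y].Sublist b) B = lam :=
          hB.2 x y hxy
        rw [← hcancel, Multiset.countP_add] at hBcount
        rw [hB'def, Multiset.countP_add, ← hpair]
        exact hBcount
    have hSB' : S ≤ B' := le_trans hS' (Multiset.le_add_right _ _)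
    have heq : B' = B := huniq B' hdesign hSB'
    have : B + Ttwo i = B + Tone i := by
      have := congrArg (· + Tone i) heq
      simp only [hB'def] at this
      calc B + Ttwo i = B - Tone i + Tone i + Ttwo i := by rw [hcancel]
        _ = B - Tone i + Ttwo i + Tone i := add_right_comm _ _ _
        _ = B + Tone i := this
    have hTT : Ttwo i = Tone i := by
      exact add_left_cancel this
    obtain ⟨b, hb⟩ := Multiset.exists_mem_of_ne_zero hne
    exact hdisj12 b hb (hTT ▸ hb)
  choose f hfS hfT using key
  have hinj : Function.Injective f := by
    intro i j hij
    by_contra hne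
    exact hdisj i j hne (f i) (hfT i) (hij ▸ hfT j)
  calc m = (Finset.univ.image f).card := by
        rw [Finset.card_image_of_injective _ hinj, Finset.card_univ, Fintype.card_fin]
    _ ≤ S.toFinset.card := by
        apply Finset.card_le_card
        intro b hb
        simp only [Finset.mem_image] at hb
        obtain ⟨i, _, rfl⟩ := hb
        exact Multiset.mem_toFinset.mpr (hfS i)
    _ ≤ Multiset.card S := Multiset.toFinset_card_le S
end

section
/- If a (v,k,λ) directed design 𝒟 contains a cyclical trade T = T₁ − T₂ of volume s, then every defining set of 𝒟 must contain at least ⌊(s+1)/2⌋ blocks of T₁. -/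
/-- `T = T₁ - T₂` is a cyclical trade of volume `s`: it is a `(v,k,2)` directed
trade of volume `s` whose first collection can be enumerated as
`b 0, b 1, …, b (s-1)` so that each pair of consecutive blocks
`b i, b ((i+1) % s)`, together with corresponding blocks of `T₂`, forms a
directed trade of volume `2`. -/
def IsCyclicalTrade (v k s : ℕ) (T₁ T₂ : Multiset (List (Fin v))) : Prop :=
  IsDirectedTrade v k 2 T₁ T₂ ∧ Multiset.card T₁ = s ∧
  ∃ b : ℕ → List (Fin v),
    T₁ = ↑((List.range s).map b) ∧
    ∀ i < s, ∃ U : Multiset (List (Fin v)), U ≤ T₂ ∧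
      IsDirectedTrade v k 2 {b i, b ((i + 1) % s)} U

/-!
Each pair of consecutive blocks `b i, b (i + 1)` of the cyclical trade can be traded away
inside `B`, so a defining set `S` cannot leave both of them uncovered: otherwise `S` would
also lie in the different design obtained by the trade. Hence the blocks of `T₁` not covered
by `S` form an independent set of indices on the cycle of length `s`, of size at most `s / 2`.
-/

open Multiset

theorem Multiset.exists_le_map_eq_of_le_map {α β : Type*} {f : α → β} {m : Multiset β}
    {n : Multiset α} (h : m ≤ n.map f) : ∃ n' ≤ n, n'.map f = m := by
  obtain ⟨l, rfl⟩ := Quot.exists_rep m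
  obtain ⟨l', rfl⟩ := Quot.exists_rep n
  obtain ⟨w, hw, hsub⟩ := coe_le.mp h
  obtain ⟨l'', hl'', rfl⟩ := List.sublist_map_iff.mp hsub
  exact ⟨l'', coe_le.mpr hl''.subperm, coe_eq_coe.mpr hw⟩

theorem Finset.two_mul_card_le_of_succ_mod_notMem {s : ℕ} {I : Finset ℕ}
    (hI : I ⊆ Finset.range s) (h : ∀ i ∈ I, (i + 1) % s ∉ I) : 2 * I.card ≤ s := by
  set f : ℕ → ℕ := fun i => (i + 1) % s
  have hlt : ∀ i ∈ I, i < s := fun i hi => Finset.mem_range.mp (hI hi)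
  have hIco : ∀ i ∈ I, i + 1 ∈ (Finset.Ico 1 (1 + s) : Set ℕ) := fun i hi => by
    have := hlt i hi
    simp only [Finset.coe_Ico, Set.mem_Ico]; omega
  have hinj : Set.InjOn f I := fun i hi j hj hij =>
    Nat.succ_injective (Nat.mod_injOn_Ico 1 s (hIco i hi) (hIco j hj) hij)
  have himage : I.image f ⊆ Finset.range s := fun _ hx => by
    obtain ⟨i, hi, rfl⟩ := Finset.mem_image.mp hx
    exact Finset.mem_range.mpr (Nat.mod_lt _ (by linarith [hlt i hi]))
  have hdisj : Disjoint I (I.image f) := Finset.disjoint_right.mpr fun _ hx => by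
    obtain ⟨i, hi, rfl⟩ := Finset.mem_image.mp hx
    exact h i hi
  calc 2 * I.card = (I ∪ I.image f).card := by
        rw [Finset.card_union_of_disjoint hdisj, Finset.card_image_of_injOn hinj, two_mul]
    _ ≤ s := by simpa using Finset.card_le_card (Finset.union_subset hI himage)

theorem Nat.succ_mod_ne_self {s i : ℕ} (hs : s ≠ 1) (hi : i < s) : (i + 1) % s ≠ i := by
  rcases Nat.lt_or_ge (i + 1) s with h | h
  · rw [Nat.mod_eq_of_lt h]; omega
  · rw [show i + 1 = s by omega, Nat.mod_self]; omega

theorem Multiset.two_mul_card_le_of_forall_pair_not_le {α : Type*} {b : ℕ → α} {s : ℕ}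
    (hs : s ≠ 1) {R : Multiset α} (hR : R ≤ ↑((List.range s).map b))
    (hpair : ∀ i < s, ¬ {b i, b ((i + 1) % s)} ≤ R) : 2 * card R ≤ s := by
  obtain ⟨J, hJ, rfl⟩ := exists_le_map_eq_of_le_map (n := range s) hR
  have hJnodup : J.Nodup := nodup_of_le hJ (nodup_range s)
  have hJlt : ∀ {i}, i ∈ J → i < s := fun hi => mem_range.mp (mem_of_le hJ hi)
  simpa using Finset.two_mul_card_le_of_succ_mod_notMem (I := ⟨J, hJnodup⟩)
    (fun i hi => Finset.mem_range.mpr (hJlt hi)) fun i hi hsucc => by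
      have hne : i ≠ (i + 1) % s := (Nat.succ_mod_ne_self hs (hJlt hi)).symm
      have hle : {i, (i + 1) % s} ≤ J :=
        (le_iff_subset (by simp [hne])).mpr (by simpa [insert_eq_cons] using ⟨hi, hsucc⟩)
      simpa using hpair i (hJlt hi) (map_le_map (f := b) hle)

variable {v k lam : ℕ}

theorem IsDirectedTrade.ne {t : ℕ} {T₁ T₂ : Multiset (List (Fin v))}
    (h : IsDirectedTrade v k t T₁ T₂) : T₁ ≠ T₂ := by
  obtain ⟨hne, hdisj, -⟩ := h
  rintro rfl
  obtain ⟨x, hx⟩ := exists_mem_of_ne_zero hne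
  exact hdisj x hx hx

theorem IsDirectedDesign.sub_add_of_trade {B P U : Multiset (List (Fin v))}
    (hB : IsDirectedDesign v k lam B) (hP : P ≤ B) (hPU : IsDirectedTrade v k 2 P U) :
    IsDirectedDesign v k lam (B - P + U) := by
  obtain ⟨-, -, -, hblocks, hpairs⟩ := hPU
  refine ⟨fun c hc => ?_, fun x y hxy => ?_⟩
  · rcases mem_add.mp hc with h | h
    · exact hB.1 c (mem_of_le (Multiset.sub_le_self B P) h)
    · exact hblocks c (mem_add.mpr (Or.inr h))
  · have hsplit := congrArg (countP fun b => [x, y].Sublist b) (tsub_add_cancel_of_le hP)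
    rw [countP_add] at hsplit
    rw [countP_add, ← hpairs [x, y] rfl (by simp [hxy]), ← hB.2 x y hxy, ← hsplit]

theorem IsDefiningSet.not_add_le_of_trade {B S P U : Multiset (List (Fin v))}
    (hB : IsDirectedDesign v k lam B) (hS : IsDefiningSet v k lam B S)
    (hPU : IsDirectedTrade v k 2 P U) : ¬ S + P ≤ B := by
  intro hle
  have hP : P ≤ B := le_of_add_le_right hle
  have htraded : B - P + U = B - P + P :=
    (hS.2 _ (hB.sub_add_of_trade hP hPU) ((le_tsub_of_add_le_right hle).trans
      (le_add_right _ _))).trans (tsub_add_cancel_of_le hP).symm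
  exact hPU.ne (add_left_cancel htraded).symm

/-- If a `(v,k,λ)` directed design `B` contains a cyclical trade `T₁ - T₂` of
volume `s`, then every defining set of `B` contains at least `⌊(s+1)/2⌋`
blocks of `T₁`. -/
theorem definingSet_card_of_cyclical_trade (v k lam s : ℕ)
    (B : Multiset (List (Fin v))) (hB : IsDirectedDesign v k lam B)
    (T₁ T₂ : Multiset (List (Fin v))) (hcyc : IsCyclicalTrade v k s T₁ T₂)
    (hsub : T₁ ≤ B) :
    ∀ S : Multiset (List (Fin v)), IsDefiningSet v k lam B S →
      (s + 1) / 2 ≤ Multiset.card (S ∩ T₁) := by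
  intro S hS
  obtain ⟨⟨-, -, hcard₂, -⟩, hcard₁, b, hT₁, hcons⟩ := hcyc
  have hs : s ≠ 1 := by
    -- the cycle `b 0, b 0` would need a trade of volume 2 inside `T₂`, of volume 1
    rintro rfl
    obtain ⟨U, hU, -, -, hcardU, -⟩ := hcons 0 one_pos
    have := card_le_card hU
    simp only [insert_eq_cons, card_cons, card_singleton] at hcardU
    omega
  have huncovered : 2 * card (T₁ - S) ≤ s :=
    two_mul_card_le_of_forall_pair_not_le hs (tsub_le_self.trans hT₁.le) fun i hi hle => by
      obtain ⟨U, -, htrade⟩ := hcons i hi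
      exact hS.not_add_le_of_trade hB htrade
        (add_le_of_le_tsub_left_of_le hS.1 (hle.trans (tsub_le_tsub_right hsub S)))
  have hsplit := congrArg card (sub_add_inter T₁ S)
  rw [card_add, inter_comm, hcard₁] at hsplit
  omega
end

section
/- If there exist a super-simple (k,λ)-DGDD of group type g₁^{u₁}g₂^{u₂}⋯g_t^{u_t} with d ≥ 1/2 and, for each i with 1 ≤ i ≤ t, a super-simple (g_i + η, k, λ) directed design with d ≥ 1/2, where η = 0 or 1, then there exists a super-simple (Σ_{i=1}^t g_i u_i + η, k, λ) directed design with d ≥ 1/2. -/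
/-- There exists a super-simple `(v,k,λ)` directed design with `d ≥ 1/2`,
i.e. whose smallest defining sets contain at least half of its blocks. -/
def ExistsSuperSimpleDDHalf (v k lam : ℕ) : Prop :=
  ∃ B : Multiset (List (Fin v)), IsDirectedDesign v k lam B ∧
    SuperSimple v B ∧ DefiningSetsAtLeastHalf v k lam B

/-- `(Fin v, G, B)` is a `(k,λ)` directed group divisible design (DGDD):
`G` partitions the point set into groups, every block is an ordered `k`-tuple
of distinct points meeting each group in at most one point, and every ordered
pair of points from distinct groups appears (in order) in exactly `lam` blocks. -/
def IsDGDD (v k lam : ℕ) (G : Finset (Finset (Fin v)))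
    (B : Multiset (List (Fin v))) : Prop :=
  (∀ x : Fin v, ∃! g, g ∈ G ∧ x ∈ g) ∧
  (∀ b ∈ B, b.length = k ∧ b.Nodup ∧
    ∀ g ∈ G, ∀ x ∈ b, ∀ y ∈ b, x ∈ g → y ∈ g → x = y) ∧
  ∀ x y : Fin v, (∀ g ∈ G, ¬(x ∈ g ∧ y ∈ g)) →
    Multiset.countP (fun b => [x, y].Sublist b) B = lam

/-- `S` is a defining set of the `(k,λ)`-DGDD `(Fin v, G, B)`: it is a
subcollection of `B`, and `B` is the unique `(k,λ)`-DGDD with the same point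
set and group set whose block collection contains `S`. -/
def IsDGDDDefiningSet (v k lam : ℕ) (G : Finset (Finset (Fin v)))
    (B S : Multiset (List (Fin v))) : Prop :=
  S ≤ B ∧ ∀ B' : Multiset (List (Fin v)),
    IsDGDD v k lam G B' → S ≤ B' → B' = B

/-- `d ≥ 1/2` for a DGDD: every defining set (in particular a smallest one)
contains at least half of the blocks. -/
def DGDDDefiningSetsAtLeastHalf (v k lam : ℕ) (G : Finset (Finset (Fin v)))
    (B : Multiset (List (Fin v))) : Prop :=
  ∀ S : Multiset (List (Fin v)), IsDGDDDefiningSet v k lam G B S →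
    Multiset.card B ≤ 2 * Multiset.card S

/-- There exists a super-simple `(k,λ)`-DGDD whose group type (the multiset of
group sizes) is `T`, with `d ≥ 1/2`. -/
def ExistsSuperSimpleDGDDHalf (k lam : ℕ) (T : Multiset ℕ) : Prop :=
  ∃ (v : ℕ) (G : Finset (Finset (Fin v))) (B : Multiset (List (Fin v))),
    IsDGDD v k lam G B ∧ SuperSimple v B ∧
    Multiset.map Finset.card G.val = T ∧
    DGDDDefiningSetsAtLeastHalf v k lam G B

namespace FillAux



lemma le_add_split {α : Type*} [DecidableEq α] {s t u : Multiset α} (h : s ≤ t + u) :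
    ∃ s1 s2, s = s1 + s2 ∧ s1 ≤ t ∧ s2 ≤ u := by
  refine ⟨s ∩ t, s - s ∩ t, ?_, Multiset.inter_le_right .., ?_⟩
  · ext a
    simp only [Multiset.count_add, Multiset.count_sub, Multiset.count_inter]
    omega
  · rw [Multiset.le_iff_count] at *
    intro a
    have := h a
    simp only [Multiset.count_add, Multiset.count_sub, Multiset.count_inter] at *
    omega

lemma le_sum_split {ι α : Type*} [DecidableEq ι] [DecidableEq α] {F : Finset ι}
    {f : ι → Multiset α} {s : Multiset α} (h : s ≤ ∑ i ∈ F, f i) :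
    ∃ σ : ι → Multiset α, (∀ i ∈ F, σ i ≤ f i) ∧ s = ∑ i ∈ F, σ i := by
  classical
  induction F using Finset.induction generalizing s with
  | empty => simp only [Finset.sum_empty, Multiset.le_zero] at h; exact ⟨fun _ => 0, by simp, by simpa using h⟩
  | @insert a F' hni ih =>
    rw [Finset.sum_insert hni] at h
    obtain ⟨s1, s2, hs, h1, h2⟩ := le_add_split h
    obtain ⟨σ', hσ', hσs⟩ := ih h2
    refine ⟨Function.update σ' a s1, ?_, ?_⟩
    · intro i hi
      rcases Finset.mem_insert.mp hi with rfl | hi2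
      · simpa using h1
      · rw [Function.update_of_ne (by rintro rfl; exact hni hi2)]; exact hσ' i hi2
    · rw [Finset.sum_insert hni, Function.update_self, hs, hσs]
      congr 1
      exact Finset.sum_congr rfl fun i hi => by
        rw [Function.update_of_ne (by rintro rfl; exact hni hi)]

lemma le_map_pullback {α β : Type*} [DecidableEq α] [DecidableEq β] {f : α → β}
    (hf : Function.Injective f) {s : Multiset β} {B : Multiset α} (h : s ≤ B.map f) :
    ∃ s0, s0 ≤ B ∧ s0.map f = s := by
  induction s using Multiset.induction generalizing B with
  | empty => exact ⟨0, by simp, by simp⟩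
  | cons b s' ih =>
    have hb : b ∈ B.map f := Multiset.mem_of_le h (Multiset.mem_cons_self _ _)
    obtain ⟨a, haB, rfl⟩ := Multiset.mem_map.mp hb
    have hs' : s' ≤ (B.erase a).map f := by
      rw [Multiset.map_erase _ hf _ _]
      rw [Multiset.le_iff_count] at h ⊢
      intro x
      have := h x
      rcases eq_or_ne x (f a) with rfl | hx
      · have hc := Multiset.count_cons_self (f a) s'
        rw [Multiset.count_erase_self]
        omega
      · rw [Multiset.count_erase_of_ne hx]
        rw [Multiset.count_cons_of_ne hx] at this
        exact this
    obtain ⟨s0, hle, hmap⟩ := ih hs'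
    refine ⟨a ::ₘ s0, ?_, by simp [hmap]⟩
    calc a ::ₘ s0 ≤ a ::ₘ B.erase a := Multiset.cons_le_cons _ hle
    _ = B := Multiset.cons_erase haB

lemma pair_le_of_mem {α : Type*} [DecidableEq α] {b1 b2 : α} {s : Multiset α}
    (hne : b1 ≠ b2) (h1 : b1 ∈ s) (h2 : b2 ∈ s) : ({b1, b2} : Multiset α) ≤ s := by
  rw [Multiset.le_iff_count]
  intro x
  have c1 : 1 ≤ Multiset.count b1 s := Multiset.one_le_count_iff_mem.mpr h1
  have c2 : 1 ≤ Multiset.count b2 s := Multiset.one_le_count_iff_mem.mpr h2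
  rcases eq_or_ne x b1 with rfl | hx1
  · simp [Multiset.count_cons, Multiset.count_singleton, hne]
    omega
  rcases eq_or_ne x b2 with rfl | hx2
  · simp [Multiset.count_cons, Multiset.count_singleton, hne.symm, hx1]
    omega
  · simp [Multiset.count_cons, Multiset.count_singleton, hx1, hx2]

lemma pair_le_add {α : Type*} [DecidableEq α] {b1 b2 : α} {s t : Multiset α}
    (h : ({b1, b2} : Multiset α) ≤ s + t) :
    ({b1, b2} : Multiset α) ≤ s ∨ ({b1, b2} : Multiset α) ≤ t ∨
      (b1 ∈ s ∧ b2 ∈ t) ∨ (b2 ∈ s ∧ b1 ∈ t) := by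
  rcases eq_or_ne b1 b2 with rfl | hne
  · have hc : 2 ≤ Multiset.count b1 s + Multiset.count b1 t := by
      have := Multiset.le_iff_count.mp h b1
      simpa [Multiset.count_cons, Multiset.count_singleton] using this
    rcases le_or_gt 2 (Multiset.count b1 s) with hs2 | hs2
    · left
      rw [Multiset.le_iff_count]
      intro x
      rcases eq_or_ne x b1 with rfl | hx
      · simpa [Multiset.count_cons, Multiset.count_singleton] using hs2
      · simp [Multiset.count_cons, Multiset.count_singleton, hx]
    rcases le_or_gt 2 (Multiset.count b1 t) with ht2 | ht2
    · right; left
      rw [Multiset.le_iff_count]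
      intro x
      rcases eq_or_ne x b1 with rfl | hx
      · simpa [Multiset.count_cons, Multiset.count_singleton] using ht2
      · simp [Multiset.count_cons, Multiset.count_singleton, hx]
    · right; right; left
      constructor <;> rw [← Multiset.one_le_count_iff_mem] <;> omega
  · have hb1 : b1 ∈ s + t := Multiset.mem_of_le h (by simp)
    have hb2 : b2 ∈ s + t := Multiset.mem_of_le h (by simp)
    rw [Multiset.mem_add] at hb1 hb2
    rcases hb1 with h1 | h1 <;> rcases hb2 with h2 | h2
    · exact Or.inl (pair_le_of_mem hne h1 h2)
    · exact Or.inr (Or.inr (Or.inl ⟨h1, h2⟩))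
    · exact Or.inr (Or.inr (Or.inr ⟨h2, h1⟩))
    · exact Or.inr (Or.inl (pair_le_of_mem hne h1 h2))

lemma pair_le_sum {ι α : Type*} [DecidableEq ι] [DecidableEq α] {F : Finset ι}
    {f : ι → Multiset α} {b1 b2 : α} (h : ({b1, b2} : Multiset α) ≤ ∑ i ∈ F, f i) :
    (∃ i ∈ F, ({b1, b2} : Multiset α) ≤ f i) ∨
      (∃ i ∈ F, ∃ j ∈ F, i ≠ j ∧ b1 ∈ f i ∧ b2 ∈ f j) := by
  classical
  induction F using Finset.induction with
  | empty => simp only [Finset.sum_empty, Multiset.le_zero] at h; simp at h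
  | @insert a F' hni ih =>
    rw [Finset.sum_insert hni] at h
    rcases pair_le_add h with h' | h' | ⟨h1, h2⟩ | ⟨h1, h2⟩
    · exact Or.inl ⟨a, Finset.mem_insert_self _ _, h'⟩
    · rcases ih h' with ⟨i, hi, hle⟩ | ⟨i, hi, j, hj, hij, hb1, hb2⟩
      · exact Or.inl ⟨i, Finset.mem_insert_of_mem hi, hle⟩
      · exact Or.inr ⟨i, Finset.mem_insert_of_mem hi, j, Finset.mem_insert_of_mem hj, hij, hb1, hb2⟩
    · obtain ⟨j, hj, hb2⟩ := Multiset.mem_sum.mp h2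
      exact Or.inr ⟨a, Finset.mem_insert_self _ _, j, Finset.mem_insert_of_mem hj,
        fun he => hni (he ▸ hj), h1, hb2⟩
    · obtain ⟨j, hj, hb1⟩ := Multiset.mem_sum.mp h2
      exact Or.inr ⟨j, Finset.mem_insert_of_mem hj, a, Finset.mem_insert_self _ _,
        fun he => hni (he ▸ hj), hb1, h1⟩

lemma countP_sum {ι α : Type*} {F : Finset ι} {f : ι → Multiset α}
    (p : α → Prop) [DecidablePred p] :
    Multiset.countP p (∑ i ∈ F, f i) = ∑ i ∈ F, Multiset.countP p (f i) := by
  classical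
  induction F using Finset.induction with
  | empty => simp
  | @insert a F' hni ih => rw [Finset.sum_insert hni, Finset.sum_insert hni,
      Multiset.countP_add, ih]





variable {v' η : ℕ}

/-- embedding of a group (plus possible extra points) into the big point set -/
def grpEmb (η : ℕ) (gr : Finset (Fin v')) (a : Fin (gr.card + η)) : Fin (v' + η) :=
  if h : (a : ℕ) < gr.card then
    Fin.castAdd η ((gr.orderIsoOfFin rfl ⟨(a : ℕ), h⟩ : gr) : Fin v')
  else ⟨v' + ((a : ℕ) - gr.card), by have := a.isLt; omega⟩

lemma castAdd_injective : Function.Injective (Fin.castAdd η : Fin v' → Fin (v' + η)) :=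
  fun a b h => Fin.ext (by simpa using congrArg Fin.val h)

lemma grpEmb_injective (gr : Finset (Fin v')) : Function.Injective (grpEmb η gr) := by
  intro a b h
  unfold grpEmb at h
  split_ifs at h with h1 h2 h2
  · have := castAdd_injective h
    have := Subtype.coe_injective this
    have := (gr.orderIsoOfFin rfl).injective this
    exact Fin.ext (by simpa using congrArg Fin.val this)
  · exfalso
    have h3 := congrArg Fin.val h
    simp only [Fin.coe_castAdd] at h3
    have : ((gr.orderIsoOfFin rfl ⟨(a : ℕ), h1⟩ : gr) : Fin v').val < v' := Fin.is_lt _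
    omega
  · exfalso
    have h3 := congrArg Fin.val h
    simp only [Fin.coe_castAdd] at h3
    have : ((gr.orderIsoOfFin rfl ⟨(b : ℕ), h2⟩ : gr) : Fin v').val < v' := Fin.is_lt _
    omega
  · have h3 := congrArg Fin.val h
    simp only at h3
    exact Fin.ext (by omega)

/-- every value of grpEmb is either an embedded group element or an extra point -/
lemma grpEmb_cases (gr : Finset (Fin v')) (a : Fin (gr.card + η)) :
    (∃ p : Fin v', p ∈ gr ∧ grpEmb η gr a = Fin.castAdd η p) ∨
      v' ≤ (grpEmb η gr a : ℕ) := by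
  unfold grpEmb
  split_ifs with h
  · exact Or.inl ⟨_, Finset.coe_mem _, rfl⟩
  · exact Or.inr (by simp)

lemma mem_range_grpEmb_of_mem {gr : Finset (Fin v')} {p : Fin v'} (hp : p ∈ gr) :
    Fin.castAdd η p ∈ Set.range (grpEmb η gr) := by
  refine ⟨⟨((gr.orderIsoOfFin rfl).symm ⟨p, hp⟩ : Fin gr.card), by have := Fin.is_lt ((gr.orderIsoOfFin rfl).symm ⟨p, hp⟩); omega⟩, ?_⟩
  unfold grpEmb
  rw [dif_pos (by exact Fin.is_lt ((gr.orderIsoOfFin rfl).symm ⟨p, hp⟩))]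
  congr 1
  have : (⟨((gr.orderIsoOfFin rfl).symm ⟨p, hp⟩ : Fin gr.card), Fin.is_lt _⟩ : Fin gr.card)
      = (gr.orderIsoOfFin rfl).symm ⟨p, hp⟩ := Fin.ext rfl
  rw [this]
  simp

lemma mem_range_grpEmb_of_ge {gr : Finset (Fin v')} {z : Fin (v' + η)} (hz : v' ≤ (z : ℕ)) :
    z ∈ Set.range (grpEmb η gr) := by
  refine ⟨⟨gr.card + ((z : ℕ) - v'), by have := z.isLt; omega⟩, ?_⟩
  unfold grpEmb
  rw [dif_neg (by simp)]
  exact Fin.ext (by simp; omega)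

lemma range_grpEmb {gr : Finset (Fin v')} {z : Fin (v' + η)} :
    z ∈ Set.range (grpEmb η gr) ↔
      (∃ p : Fin v', p ∈ gr ∧ z = Fin.castAdd η p) ∨ v' ≤ (z : ℕ) := by
  constructor
  · rintro ⟨a, rfl⟩
    rcases grpEmb_cases gr a with ⟨p, hp, he⟩ | hge
    · exact Or.inl ⟨p, hp, he⟩
    · exact Or.inr hge
  · rintro (⟨p, hp, rfl⟩ | hge)
    · exact mem_range_grpEmb_of_mem hp
    · exact mem_range_grpEmb_of_ge hge

lemma castAdd_val_lt (p : Fin v') : ((Fin.castAdd η p : Fin (v' + η)) : ℕ) < v' := p.isLt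

lemma eq_castAdd_of_lt {z : Fin (v' + η)} (hz : (z : ℕ) < v') :
    z = Fin.castAdd η ⟨(z : ℕ), hz⟩ := Fin.ext rfl





lemma pair_sublist_map_iff {α β : Type*} {e : α → β} (he : Function.Injective e)
    {x y : α} {b : List α} :
    [e x, e y].Sublist (List.map e b) ↔ [x, y].Sublist b := by
  constructor
  · intro h
    obtain ⟨l', hl', heq⟩ := List.sublist_map_iff.mp h
    have hlen : l'.length = 2 := by
      have := congrArg List.length heq
      simpa using this.symm
    obtain ⟨c, d, rfl⟩ := List.length_eq_two.mp hlen
    simp only [List.map_cons, List.map_nil, List.cons.injEq, and_true] at heq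
    obtain ⟨hc, hd⟩ := heq
    rw [he hc, he hd]
    exact hl'
  · intro h
    simpa using h.map e

lemma sublist_mem {α : Type*} {x y : α} {b : List α} (h : [x, y].Sublist b) :
    x ∈ b ∧ y ∈ b :=
  ⟨h.mem (by simp), h.mem (by simp)⟩

lemma countP_pair_map_eq {α β : Type*} [DecidableEq α] [DecidableEq β] {e : α → β}
    (he : Function.Injective e) (D : Multiset (List α)) (x y : α) :
    Multiset.countP (fun b => [e x, e y].Sublist b) (D.map (List.map e)) =
      Multiset.countP (fun b => [x, y].Sublist b) D := by
  rw [Multiset.countP_map]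
  rw [Multiset.countP_eq_card_filter]
  congr 1
  exact Multiset.filter_congr (fun b _ => pair_sublist_map_iff he)

lemma countP_pair_map_zero {α β : Type*} [DecidableEq α] [DecidableEq β] {e : α → β}
    (D : Multiset (List α)) {x y : β}
    (hx : x ∉ Set.range e ∨ y ∉ Set.range e) :
    Multiset.countP (fun b => [x, y].Sublist b) (D.map (List.map e)) = 0 := by
  rw [Multiset.countP_eq_zero]
  intro b hb hsub
  obtain ⟨b0, _, rfl⟩ := Multiset.mem_map.mp hb
  obtain ⟨hxm, hym⟩ := sublist_mem hsub
  rcases hx with hx | hy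
  · obtain ⟨a, _, rfl⟩ := List.mem_map.mp hxm
    exact hx ⟨a, rfl⟩
  · obtain ⟨a, _, rfl⟩ := List.mem_map.mp hym
    exact hy ⟨a, rfl⟩

lemma toFinset_map_list {α β : Type*} [DecidableEq α] [DecidableEq β] (e : α → β)
    (l : List α) : (l.map e).toFinset = l.toFinset.image e := by
  ext z; simp

lemma card_inter_map_le {α β : Type*} [DecidableEq α] [DecidableEq β] {e : α → β}
    (he : Function.Injective e) (l1 l2 : List α) (h : (l1.toFinset ∩ l2.toFinset).card ≤ 2) :
    ((l1.map e).toFinset ∩ (l2.map e).toFinset).card ≤ 2 := by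
  rw [toFinset_map_list, toFinset_map_list, ← Finset.image_inter _ _ he,
    Finset.card_image_of_injective _ he]
  exact h

lemma pair_eq {α : Type*} {a b c d : α} (h : ({a, b} : Multiset α) = {c, d}) :
    (a = c ∧ b = d) ∨ (a = d ∧ b = c) := by
  rcases Multiset.cons_eq_cons.mp h with ⟨h1, h2⟩ | ⟨_, cs, h1, h2⟩
  · exact Or.inl ⟨h1, Multiset.singleton_inj.mp h2⟩
  · have hcs : cs = 0 := by
      have := congrArg Multiset.card h1
      simp only [Multiset.card_singleton, Multiset.card_cons] at this
      exact Multiset.card_eq_zero.mp (by omega)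
    subst hcs
    simp only [Multiset.cons_zero] at h1 h2
    exact Or.inr ⟨(Multiset.singleton_inj.mp h2).symm, Multiset.singleton_inj.mp h1⟩

lemma card_sum {ι α : Type*} {F : Finset ι} (f : ι → Multiset α) :
    Multiset.card (∑ i ∈ F, f i) = ∑ i ∈ F, Multiset.card (f i) := by
  classical
  induction F using Finset.induction with
  | empty => simp
  | @insert a F' hni ih => rw [Finset.sum_insert hni, Finset.sum_insert hni,
      Multiset.card_add, ih]


section Main

variable {v' k lam η : ℕ} {G : Finset (Finset (Fin v'))}

/-- combine a DGDD block collection with fill designs on each group -/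
def comb (η : ℕ) (G : Finset (Finset (Fin v'))) (A : Multiset (List (Fin v')))
    (Ds : ∀ gr : {x // x ∈ G}, Multiset (List (Fin ((gr : Finset (Fin v')).card + η)))) :
    Multiset (List (Fin (v' + η))) :=
  A.map (List.map (Fin.castAdd η)) +
    ∑ gr ∈ G.attach, (Ds gr).map (List.map (grpEmb η (gr : Finset (Fin v'))))

lemma comb_isDD (hη : η ≤ 1)
    (hpart : ∀ x : Fin v', ∃! gr, gr ∈ G ∧ x ∈ gr)
    {A : Multiset (List (Fin v'))}
    {Ds : ∀ gr : {x // x ∈ G}, Multiset (List (Fin ((gr : Finset (Fin v')).card + η)))}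
    (hA1 : ∀ b ∈ A, b.length = k ∧ b.Nodup ∧
      ∀ gr ∈ G, ∀ x ∈ b, ∀ y ∈ b, x ∈ gr → y ∈ gr → x = y)
    (hA2 : ∀ x y : Fin v', (∀ gr ∈ G, ¬(x ∈ gr ∧ y ∈ gr)) →
      Multiset.countP (fun b => [x, y].Sublist b) A = lam)
    (hDs : ∀ gr : {x // x ∈ G}, IsDirectedDesign ((gr : Finset (Fin v')).card + η) k lam (Ds gr)) :
    IsDirectedDesign (v' + η) k lam (comb η G A Ds) := by
  constructor
  · intro b hb
    rw [comb, Multiset.mem_add] at hb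
    rcases hb with hb | hb
    · obtain ⟨b0, hb0, rfl⟩ := Multiset.mem_map.mp hb
      obtain ⟨hl, hn, _⟩ := hA1 b0 hb0
      exact ⟨by simp [hl], hn.map castAdd_injective⟩
    · obtain ⟨gr, _, hb⟩ := Multiset.mem_sum.mp hb
      obtain ⟨b0, hb0, rfl⟩ := Multiset.mem_map.mp hb
      obtain ⟨hl, hn⟩ := (hDs gr).1 b0 hb0
      exact ⟨by simp [hl], hn.map (grpEmb_injective _)⟩
  · intro x y hxy
    rw [comb, Multiset.countP_add, countP_sum]
    by_cases hx : (x : ℕ) < v' <;> by_cases hy : (y : ℕ) < v'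
    · -- both points embedded from Fin v'
      set x0 : Fin v' := ⟨(x : ℕ), hx⟩ with hx0def
      set y0 : Fin v' := ⟨(y : ℕ), hy⟩ with hy0def
      have hxc : x = Fin.castAdd η x0 := eq_castAdd_of_lt hx
      have hyc : y = Fin.castAdd η y0 := eq_castAdd_of_lt hy
      have hx0y0 : x0 ≠ y0 := fun h => hxy (by rw [hxc, hyc, h])
      obtain ⟨gx, ⟨hgxG, hgx⟩, hgxu⟩ := hpart x0
      obtain ⟨gy, ⟨hgyG, hgy⟩, hgyu⟩ := hpart y0
      by_cases hgg : gx = gy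
      · subst hgg
        have hAz : Multiset.countP (fun b => [x, y].Sublist b)
            (A.map (List.map (Fin.castAdd η))) = 0 := by
          rw [Multiset.countP_eq_zero]
          intro b hb hsub
          obtain ⟨b0, hb0, rfl⟩ := Multiset.mem_map.mp hb
          rw [hxc, hyc, pair_sublist_map_iff castAdd_injective] at hsub
          obtain ⟨hx0b, hy0b⟩ := sublist_mem hsub
          exact hx0y0 ((hA1 b0 hb0).2.2 gx hgxG x0 hx0b y0 hy0b hgx hgy)
        rw [hAz, zero_add]
        rw [Finset.sum_eq_single_of_mem (⟨gx, hgxG⟩ : {x // x ∈ G}) (Finset.mem_attach _ _) ?_]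
        · obtain ⟨ax, hax⟩ := mem_range_grpEmb_of_mem (η := η) hgx
          obtain ⟨ay, hay⟩ := mem_range_grpEmb_of_mem (η := η) hgy
          rw [hxc, ← hax, hyc, ← hay, countP_pair_map_eq (grpEmb_injective _)]
          refine (hDs ⟨gx, hgxG⟩).2 ax ay ?_
          rintro rfl
          exact hxy (by rw [hxc, ← hax, hyc, ← hay])
        · intro gr _ hgr
          refine countP_pair_map_zero _ (Or.inl ?_)
          intro hmem
          rcases range_grpEmb.mp hmem with ⟨p, hp, hpe⟩ | hge
          · have hpx : p = x0 := castAdd_injective (η := η) (by rw [← hpe, ← hxc])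
            subst hpx
            exact hgr (Subtype.ext (hgxu (gr : Finset (Fin v')) ⟨gr.2, hp⟩))
          · omega
      · have hfz : ∀ gr : {x // x ∈ G}, gr ∈ G.attach → Multiset.countP (fun b => [x, y].Sublist b)
            ((Ds gr).map (List.map (grpEmb η (gr : Finset (Fin v'))))) = 0 := by
          intro gr _
          refine countP_pair_map_zero _ ?_
          by_contra hc
          push_neg at hc
          obtain ⟨hxr, hyr⟩ := hc
          have hxg : x0 ∈ (gr : Finset (Fin v')) := by
            rcases range_grpEmb.mp hxr with ⟨p, hp, hpe⟩ | hge
            · have : p = x0 := castAdd_injective (η := η) (by rw [← hpe, ← hxc])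
              exact this ▸ hp
            · omega
          have hyg : y0 ∈ (gr : Finset (Fin v')) := by
            rcases range_grpEmb.mp hyr with ⟨p, hp, hpe⟩ | hge
            · have : p = y0 := castAdd_injective (η := η) (by rw [← hpe, ← hyc])
              exact this ▸ hp
            · omega
          exact hgg (((hgxu (gr : Finset (Fin v')) ⟨gr.2, hxg⟩).symm).trans
            (hgyu (gr : Finset (Fin v')) ⟨gr.2, hyg⟩))
        rw [Finset.sum_eq_zero hfz, add_zero]
        rw [hxc, hyc, countP_pair_map_eq castAdd_injective]
        refine hA2 x0 y0 ?_
        rintro gr hgrG ⟨hxg, hyg⟩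
        exact hgg (((hgxu gr ⟨hgrG, hxg⟩).symm).trans (hgyu gr ⟨hgrG, hyg⟩))
    · -- x embedded, y is the extra point
      set x0 : Fin v' := ⟨(x : ℕ), hx⟩ with hx0def
      have hxc : x = Fin.castAdd η x0 := eq_castAdd_of_lt hx
      obtain ⟨gx, ⟨hgxG, hgx⟩, hgxu⟩ := hpart x0
      have hAz : Multiset.countP (fun b => [x, y].Sublist b)
          (A.map (List.map (Fin.castAdd η))) = 0 :=
        countP_pair_map_zero _ (Or.inr (fun ⟨p, hp⟩ => hy (hp ▸ p.isLt)))
      rw [hAz, zero_add]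
      rw [Finset.sum_eq_single_of_mem (⟨gx, hgxG⟩ : {x // x ∈ G}) (Finset.mem_attach _ _) ?_]
      · obtain ⟨ax, hax⟩ := mem_range_grpEmb_of_mem (η := η) hgx
        obtain ⟨ay, hay⟩ := mem_range_grpEmb_of_ge (gr := gx) (Nat.le_of_not_lt hy)
        rw [hxc, ← hax, ← hay, countP_pair_map_eq (grpEmb_injective _)]
        refine (hDs ⟨gx, hgxG⟩).2 ax ay ?_
        rintro rfl
        exact hxy (by rw [hxc, ← hax, ← hay])
      · intro gr _ hgr
        refine countP_pair_map_zero _ (Or.inl ?_)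
        intro hmem
        rcases range_grpEmb.mp hmem with ⟨p, hp, hpe⟩ | hge
        · have hpx : p = x0 := castAdd_injective (η := η) (by rw [← hpe, ← hxc])
          subst hpx
          exact hgr (Subtype.ext (hgxu (gr : Finset (Fin v')) ⟨gr.2, hp⟩))
        · omega
    · -- y embedded, x is the extra point
      set y0 : Fin v' := ⟨(y : ℕ), hy⟩ with hy0def
      have hyc : y = Fin.castAdd η y0 := eq_castAdd_of_lt hy
      obtain ⟨gy, ⟨hgyG, hgy⟩, hgyu⟩ := hpart y0
      have hAz : Multiset.countP (fun b => [x, y].Sublist b)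
          (A.map (List.map (Fin.castAdd η))) = 0 :=
        countP_pair_map_zero _ (Or.inl (fun ⟨p, hp⟩ => hx (hp ▸ p.isLt)))
      rw [hAz, zero_add]
      rw [Finset.sum_eq_single_of_mem (⟨gy, hgyG⟩ : {x // x ∈ G}) (Finset.mem_attach _ _) ?_]
      · obtain ⟨ay, hay⟩ := mem_range_grpEmb_of_mem (η := η) hgy
        obtain ⟨ax, hax⟩ := mem_range_grpEmb_of_ge (gr := gy) (Nat.le_of_not_lt hx)
        rw [hyc, ← hax, ← hay, countP_pair_map_eq (grpEmb_injective _)]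
        refine (hDs ⟨gy, hgyG⟩).2 ax ay ?_
        rintro rfl
        exact hxy (by rw [hyc, ← hax, ← hay])
      · intro gr _ hgr
        refine countP_pair_map_zero _ (Or.inr ?_)
        intro hmem
        rcases range_grpEmb.mp hmem with ⟨p, hp, hpe⟩ | hge
        · have hpy : p = y0 := castAdd_injective (η := η) (by rw [← hpe, ← hyc])
          subst hpy
          exact hgr (Subtype.ext (hgyu (gr : Finset (Fin v')) ⟨gr.2, hp⟩))
        · omega
    · exfalso
      have hx2 := x.isLt
      have hy2 := y.isLt
      exact hxy (Fin.ext (by omega))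

end Main
section Super

variable {v' η : ℕ} {G : Finset (Finset (Fin v'))}

lemma superSimple_pullback {α β : Type*} [DecidableEq α] [DecidableEq β] {e : α → β}
    (he : Function.Injective e) {D : Multiset (List α)}
    (hs : ∀ a1 a2 : List α, ({a1, a2} : Multiset (List α)) ≤ D →
      (a1.toFinset ∩ a2.toFinset).card ≤ 2)
    {b1 b2 : List β} (h : ({b1, b2} : Multiset (List β)) ≤ D.map (List.map e)) :
    (b1.toFinset ∩ b2.toFinset).card ≤ 2 := by
  obtain ⟨s0, hs0, hmap⟩ := le_map_pullback (List.map_injective_iff.mpr he) h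
  have hc2 : Multiset.card s0 = 2 := by
    have := congrArg Multiset.card hmap
    simpa using this
  obtain ⟨a1, a2, rfl⟩ := Multiset.card_eq_two.mp hc2
  have hmap2 : ({a1.map e, a2.map e} : Multiset (List β)) = {b1, b2} := by
    simpa using hmap
  rcases pair_eq hmap2 with ⟨h1, h2⟩ | ⟨h1, h2⟩
  · rw [← h1, ← h2]
    exact card_inter_map_le he _ _ (hs a1 a2 hs0)
  · rw [← h1, ← h2]
    exact card_inter_map_le he _ _ (hs a2 a1 (by rwa [Multiset.pair_comm]))

lemma cross_A_fill (hpart : ∀ x : Fin v', ∃! gr, gr ∈ G ∧ x ∈ gr)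
    {gr : {x // x ∈ G}} {a1 : List (Fin v')}
    (htrans : ∀ x ∈ a1, ∀ y ∈ a1, x ∈ (gr : Finset (Fin v')) →
      y ∈ (gr : Finset (Fin v')) → x = y)
    {a2 : List (Fin ((gr : Finset (Fin v')).card + η))} :
    ((a1.map (Fin.castAdd η)).toFinset ∩
      (a2.map (grpEmb η (gr : Finset (Fin v')))).toFinset).card ≤ 2 := by
  refine le_trans (Finset.card_le_one.mpr ?_) (by norm_num)
  intro z hz w hw
  rw [Finset.mem_inter, List.mem_toFinset, List.mem_toFinset] at hz hw
  obtain ⟨hz1, hz2⟩ := hz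
  obtain ⟨hw1, hw2⟩ := hw
  obtain ⟨pz, hpz, hpze⟩ := List.mem_map.mp hz1
  obtain ⟨cz, hcz, hcze⟩ := List.mem_map.mp hz2
  obtain ⟨pw, hpw, hpwe⟩ := List.mem_map.mp hw1
  obtain ⟨cw, hcw, hcwe⟩ := List.mem_map.mp hw2
  have hzg : pz ∈ (gr : Finset (Fin v')) := by
    rcases grpEmb_cases (gr : Finset (Fin v')) cz with ⟨q, hq, hqe⟩ | hge
    · have : q = pz := castAdd_injective (η := η) (by rw [← hqe, hcze, hpze])
      exact this ▸ hq
    · rw [hcze] at hge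
      rw [← hpze] at hge
      exact absurd hge (by have := castAdd_val_lt (η := η) pz; omega)
  have hwg : pw ∈ (gr : Finset (Fin v')) := by
    rcases grpEmb_cases (gr : Finset (Fin v')) cw with ⟨q, hq, hqe⟩ | hge
    · have : q = pw := castAdd_injective (η := η) (by rw [← hqe, hcwe, hpwe])
      exact this ▸ hq
    · rw [hcwe] at hge
      rw [← hpwe] at hge
      exact absurd hge (by have := castAdd_val_lt (η := η) pw; omega)
  have : pz = pw := htrans pz hpz pw hpw hzg hwg
  rw [← hpze, ← hpwe, this]

lemma cross_fill_fill (hη : η ≤ 1)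
    (hpart : ∀ x : Fin v', ∃! gr, gr ∈ G ∧ x ∈ gr)
    {gr gr' : {x // x ∈ G}} (hne : gr ≠ gr')
    {a1 : List (Fin ((gr : Finset (Fin v')).card + η))}
    {a2 : List (Fin ((gr' : Finset (Fin v')).card + η))} :
    ((a1.map (grpEmb η (gr : Finset (Fin v')))).toFinset ∩
      (a2.map (grpEmb η (gr' : Finset (Fin v')))).toFinset).card ≤ 2 := by
  refine le_trans (Finset.card_le_one.mpr ?_) (by norm_num)
  have key : ∀ z : Fin (v' + η),
      z ∈ (a1.map (grpEmb η (gr : Finset (Fin v')))).toFinset ∩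
        (a2.map (grpEmb η (gr' : Finset (Fin v')))).toFinset → v' ≤ (z : ℕ) := by
    intro z hz
    rw [Finset.mem_inter, List.mem_toFinset, List.mem_toFinset] at hz
    obtain ⟨hz1, hz2⟩ := hz
    obtain ⟨c1, _, hc1⟩ := List.mem_map.mp hz1
    obtain ⟨c2, _, hc2⟩ := List.mem_map.mp hz2
    rcases grpEmb_cases (gr : Finset (Fin v')) c1 with ⟨p, hp, hpe⟩ | hge
    · rcases grpEmb_cases (gr' : Finset (Fin v')) c2 with ⟨q, hq, hqe⟩ | hge'
      · exfalso
        have hpq : p = q := castAdd_injective (η := η)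
          (by rw [← hpe, ← hqe, hc1, hc2])
        obtain ⟨g0, _, hg0u⟩ := hpart p
        have e1 : (gr : Finset (Fin v')) = g0 := hg0u _ ⟨gr.2, hp⟩
        have e2 : (gr' : Finset (Fin v')) = g0 := hg0u _ ⟨gr'.2, hpq ▸ hq⟩
        exact hne (Subtype.ext (e1.trans e2.symm))
      · rw [hc2] at hge'; omega
    · rw [hc1] at hge; omega
  intro z hz w hw
  have h1 := key z hz
  have h2 := key w hw
  have hz2 := z.isLt
  have hw2 := w.isLt
  exact Fin.ext (by omega)

lemma comb_superSimple (hη : η ≤ 1)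
    (hpart : ∀ x : Fin v', ∃! gr, gr ∈ G ∧ x ∈ gr)
    {A : Multiset (List (Fin v'))}
    {Ds : ∀ gr : {x // x ∈ G}, Multiset (List (Fin ((gr : Finset (Fin v')).card + η)))}
    (hA1 : ∀ b ∈ A, ∀ gr ∈ G, ∀ x ∈ b, ∀ y ∈ b, x ∈ gr → y ∈ gr → x = y)
    (hsA : SuperSimple v' A)
    (hsDs : ∀ gr : {x // x ∈ G},
      SuperSimple ((gr : Finset (Fin v')).card + η) (Ds gr)) :
    SuperSimple (v' + η) (comb η G A Ds) := by
  intro b1 b2 hle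
  rw [comb] at hle
  rcases pair_le_add hle with h | h | ⟨h1, h2⟩ | ⟨h1, h2⟩
  · exact superSimple_pullback castAdd_injective hsA h
  · rcases pair_le_sum h with ⟨gr, _, hle'⟩ | ⟨gr, _, gr', _, hne, hb1, hb2⟩
    · exact superSimple_pullback (grpEmb_injective _) (hsDs gr) hle'
    · obtain ⟨a1, _, rfl⟩ := Multiset.mem_map.mp hb1
      obtain ⟨a2, _, rfl⟩ := Multiset.mem_map.mp hb2
      exact cross_fill_fill hη hpart hne
  · obtain ⟨a1, ha1, rfl⟩ := Multiset.mem_map.mp h1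
    obtain ⟨gr, _, hb2⟩ := Multiset.mem_sum.mp h2
    obtain ⟨a2, _, rfl⟩ := Multiset.mem_map.mp hb2
    exact cross_A_fill hpart (fun x hx y hy => hA1 a1 ha1 _ gr.2 x hx y hy)
  · obtain ⟨a1, ha1, rfl⟩ := Multiset.mem_map.mp h1
    obtain ⟨gr, _, hb1⟩ := Multiset.mem_sum.mp h2
    obtain ⟨a2, _, rfl⟩ := Multiset.mem_map.mp hb1
    rw [Finset.inter_comm]
    exact cross_A_fill hpart (fun x hx y hy => hA1 a1 ha1 _ gr.2 x hx y hy)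

end Super
lemma msum_finsetSum {ι : Type*} {F : Finset ι} (f : ι → Multiset ℕ) :
    (∑ i ∈ F, f i).sum = ∑ i ∈ F, (f i).sum := by
  classical
  induction F using Finset.induction with
  | empty => simp
  | @insert a F' hni ih => rw [Finset.sum_insert hni, Finset.sum_insert hni,
      Multiset.sum_add, ih]
end FillAux
/-- If there exist a super-simple `(k,λ)`-DGDD of group type
`g₁^{u₁} g₂^{u₂} ⋯ g_t^{u_t}` with `d ≥ 1/2` and, for each `1 ≤ i ≤ t`, a
super-simple `(g_i + η, k, λ)` directed design with `d ≥ 1/2`, where `η = 0`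
or `1`, then there exists a super-simple `(∑ g_i u_i + η, k, λ)` directed
design with `d ≥ 1/2`. -/
theorem filling_construction (k lam t η : ℕ) (hη : η = 0 ∨ η = 1)
    (g u : Fin t → ℕ)
    (hDGDD : ExistsSuperSimpleDGDDHalf k lam
      (∑ i : Fin t, Multiset.replicate (u i) (g i)))
    (hDD : ∀ i : Fin t, ExistsSuperSimpleDDHalf (g i + η) k lam) :
    ExistsSuperSimpleDDHalf (∑ i : Fin t, g i * u i + η) k lam := by
  classical
  have hη1 : η ≤ 1 := by rcases hη with rfl | rfl <;> omega
  obtain ⟨v', G, B, hBdgdd, hBss, hGtype, hBhalf⟩ := hDGDD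
  obtain ⟨hpart, hblocks, hcount⟩ := hBdgdd
  -- the number of points of the DGDD is the sum of the group sizes
  have hdisj : ∀ g1 ∈ G, ∀ g2 ∈ G, g1 ≠ g2 → Disjoint g1 g2 := by
    intro g1 hg1 g2 hg2 hne
    rw [Finset.disjoint_left]
    intro x hx1 hx2
    obtain ⟨g0, _, hg0u⟩ := hpart x
    exact hne ((hg0u g1 ⟨hg1, hx1⟩).trans (hg0u g2 ⟨hg2, hx2⟩).symm)
  have hcover : G.biUnion (fun s => s) = Finset.univ := by
    ext x
    simp only [Finset.mem_biUnion, Finset.mem_univ, iff_true]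
    obtain ⟨g0, ⟨hg0G, hg0x⟩, _⟩ := hpart x
    exact ⟨g0, hg0G, hg0x⟩
  have hv : v' = ∑ i : Fin t, g i * u i := by
    have h1 : ∑ gr ∈ G, gr.card = v' := by
      rw [← Finset.card_biUnion hdisj, hcover, Finset.card_univ, Fintype.card_fin]
    have h2 : ∑ gr ∈ G, gr.card = (Multiset.map Finset.card G.val).sum := by
      rfl
    rw [h2, hGtype, FillAux.msum_finsetSum] at h1
    rw [← h1]
    refine Finset.sum_congr rfl fun i _ => ?_
    rw [Multiset.sum_replicate, smul_eq_mul, mul_comm]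
  rw [← hv]
  -- fill designs for each group
  have hfill : ∀ gr : {x // x ∈ G},
      ExistsSuperSimpleDDHalf ((gr : Finset (Fin v')).card + η) k lam := by
    intro gr
    have hmem : (gr : Finset (Fin v')).card ∈ Multiset.map Finset.card G.val :=
      Multiset.mem_map_of_mem _ (Finset.mem_val.mpr gr.2)
    rw [hGtype] at hmem
    obtain ⟨i, _, hi⟩ := Multiset.mem_sum.mp hmem
    have hcg := Multiset.eq_of_mem_replicate hi
    have h := hDD i
    rw [← hcg] at h
    exact h
  set Ds : ∀ gr : {x // x ∈ G},
      Multiset (List (Fin ((gr : Finset (Fin v')).card + η))) :=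
    fun gr => (hfill gr).choose with hDsdef
  have hDs : ∀ gr : {x // x ∈ G},
      IsDirectedDesign ((gr : Finset (Fin v')).card + η) k lam (Ds gr) ∧
      SuperSimple ((gr : Finset (Fin v')).card + η) (Ds gr) ∧
      DefiningSetsAtLeastHalf ((gr : Finset (Fin v')).card + η) k lam (Ds gr) :=
    fun gr => (hfill gr).choose_spec
  refine ⟨FillAux.comb η G B Ds,
    FillAux.comb_isDD hη1 hpart hblocks hcount (fun gr => (hDs gr).1),
    FillAux.comb_superSimple hη1 hpart (fun b hb => (hblocks b hb).2.2) hBss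
      (fun gr => (hDs gr).2.1), ?_⟩
  -- the defining set bound
  intro S hS
  obtain ⟨hSle, hSuniq⟩ := hS
  rw [FillAux.comb] at hSle
  obtain ⟨S0, SC, hSsplit, hS0le, hSCle⟩ := FillAux.le_add_split hSle
  obtain ⟨σ, hσle, hσsum⟩ := FillAux.le_sum_split hSCle
  have hinjA : Function.Injective (List.map (Fin.castAdd η : Fin v' → Fin (v' + η))) :=
    List.map_injective_iff.mpr FillAux.castAdd_injective
  have hcard_comb : Multiset.card (FillAux.comb η G B Ds) =
      Multiset.card B + ∑ gr ∈ G.attach, Multiset.card (Ds gr) := by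
    rw [FillAux.comb, Multiset.card_add, Multiset.card_map, FillAux.card_sum]
    congr 1
    exact Finset.sum_congr rfl fun _ _ => Multiset.card_map _ _
  have hcard_S : Multiset.card S =
      Multiset.card S0 + ∑ gr ∈ G.attach, Multiset.card (σ gr) := by
    rw [hSsplit, hσsum, Multiset.card_add, FillAux.card_sum]
  -- part 1 : the DGDD blocks
  obtain ⟨S0', hS0'le, hS0'map⟩ := FillAux.le_map_pullback hinjA hS0le
  have hB2 : Multiset.card B ≤ 2 * Multiset.card S0 := by
    have hdefset : IsDGDDDefiningSet v' k lam G B S0' := by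
      refine ⟨hS0'le, ?_⟩
      intro B' hB' hleB'
      have hdd' : IsDirectedDesign (v' + η) k lam (FillAux.comb η G B' Ds) :=
        FillAux.comb_isDD hη1 hpart hB'.2.1 hB'.2.2 (fun gr => (hDs gr).1)
      have hSle' : S ≤ FillAux.comb η G B' Ds := by
        rw [hSsplit, FillAux.comb]
        refine add_le_add ?_ ?_
        · rw [← hS0'map]
          exact Multiset.map_le_map hleB'
        · rw [hσsum]
          exact Finset.sum_le_sum hσle
      have heq := hSuniq _ hdd' hSle'
      rw [FillAux.comb, FillAux.comb] at heq
      have heq2 := add_right_cancel heq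
      exact Multiset.map_injective hinjA heq2
    have hb := hBhalf S0' hdefset
    have : Multiset.card S0' = Multiset.card S0 := by
      rw [← hS0'map, Multiset.card_map]
    omega
  -- part 2 : the filling designs
  have hD2 : ∀ gr ∈ G.attach, Multiset.card (Ds gr) ≤ 2 * Multiset.card (σ gr) := by
    intro gr hgr
    have hinjg : Function.Injective
        (List.map (FillAux.grpEmb η (gr : Finset (Fin v')))) :=
      List.map_injective_iff.mpr (FillAux.grpEmb_injective _)
    obtain ⟨Sg', hSg'le, hSg'map⟩ := FillAux.le_map_pullback hinjg (hσle gr hgr)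
    have hdefset : IsDefiningSet ((gr : Finset (Fin v')).card + η) k lam (Ds gr) Sg' := by
      refine ⟨hSg'le, ?_⟩
      intro D' hD' hleD'
      have hdd' : IsDirectedDesign (v' + η) k lam
          (FillAux.comb η G B (Function.update Ds gr D')) := by
        refine FillAux.comb_isDD hη1 hpart hblocks hcount (fun h => ?_)
        rcases eq_or_ne h gr with rfl | hne
        · rw [Function.update_self]; exact hD'
        · rw [Function.update_of_ne hne]; exact (hDs h).1
      have hSle' : S ≤ FillAux.comb η G B (Function.update Ds gr D') := by
        rw [hSsplit, FillAux.comb]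
        refine add_le_add hS0le ?_
        rw [hσsum]
        refine Finset.sum_le_sum fun h hh => ?_
        rcases eq_or_ne h gr with rfl | hne
        · rw [Function.update_self, ← hSg'map]
          exact Multiset.map_le_map hleD'
        · rw [Function.update_of_ne hne]
          exact hσle h hh
      have heq := hSuniq _ hdd' hSle'
      rw [FillAux.comb, FillAux.comb] at heq
      have heq2 := add_left_cancel heq
      rw [← Finset.sum_erase_add _ _ hgr, ← Finset.sum_erase_add _ _ hgr] at heq2
      rw [show (∑ h ∈ G.attach.erase gr,
          (Function.update Ds gr D' h).map
            (List.map (FillAux.grpEmb η (h : Finset (Fin v'))))) =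
          ∑ h ∈ G.attach.erase gr,
            (Ds h).map (List.map (FillAux.grpEmb η (h : Finset (Fin v')))) from
        Finset.sum_congr rfl fun h hh => by
          rw [Function.update_of_ne (Finset.ne_of_mem_erase hh)]] at heq2
      have heq3 := add_left_cancel heq2
      rw [Function.update_self] at heq3
      exact Multiset.map_injective hinjg heq3
    have hb := (hDs gr).2.2 Sg' hdefset
    have : Multiset.card Sg' = Multiset.card (σ gr) := by
      rw [← hSg'map, Multiset.card_map]
    omega
  rw [hcard_comb, hcard_S, Nat.mul_add, Finset.mul_sum]
  exact Nat.add_le_add hB2 (Finset.sum_le_sum hD2)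
end

section
/- There exists a super-simple (5,2)-DGDD of group type 5⁵ (five groups each of size 5, so 25 points) with d ≥ 1/2. -/
/-!
The 100 blocks are the translates, under the cyclic shift inside each group, of ten base pairs
of blocks of the shape `x y t₁ t₂ t₃`, `u₁ u₂ u₃ y x`. Exchanging `x` and `y` in both blocks of
such a pair covers exactly the same ordered pairs, so a defining set that missed both blocks of a
pair would also define the design with that pair exchanged. Hence a defining set meets each of the
50 disjoint pairs and contains at least half of the blocks. The design axioms and
super-simplicity are checked by computation.
-/

theorem Multiset.card_sum_le_mul_card {ι α : Type*} {s : Finset ι} {T : ι → Multiset α}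
    {S : Multiset α} {m : ℕ} (hnd : (∑ i ∈ s, T i).Nodup) (hcard : ∀ i ∈ s, card (T i) ≤ m)
    (hS : ∀ i ∈ s, ∃ b ∈ S, b ∈ T i) : card (∑ i ∈ s, T i) ≤ m * card S := by
  classical
  have hdisj : ∀ i ∈ s, ∀ j ∈ s, i ≠ j → Disjoint (T i) (T j) := by
    intro i hi j hj hij
    have hle : T i + T j ≤ ∑ i ∈ s, T i := by
      rw [← Finset.sum_pair hij]
      exact Finset.sum_le_sum_of_subset (by simp [Finset.insert_subset_iff, hi, hj])
    exact (Multiset.nodup_add.mp (Multiset.nodup_of_le hle hnd)).2.2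
  have hs : s.card ≤ S.toFinset.card :=
    Finset.card_le_card_of_forall_subsingleton (fun i b => b ∈ T i)
      (fun i hi => by simpa using hS i hi)
      (fun b _ i ⟨hi, hbi⟩ j ⟨hj, hbj⟩ => by
        by_contra hij
        exact Multiset.disjoint_left.mp (hdisj i hi j hj hij) hbi hbj)
  calc card (∑ i ∈ s, T i) = ∑ i ∈ s, card (T i) := Multiset.card_sum s T
    _ ≤ ∑ _i ∈ s, m := Finset.sum_le_sum hcard
    _ = m * s.card := by rw [Finset.sum_const, smul_eq_mul, mul_comm]
    _ ≤ m * card S := Nat.mul_le_mul_left m (hs.trans (Multiset.toFinset_card_le S))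

section Trades

variable {v : ℕ}

def IsDGDDBlock (k : ℕ) (G : Finset (Finset (Fin v))) (b : List (Fin v)) : Prop :=
  b.length = k ∧ b.Nodup ∧ ∀ g ∈ G, ∀ x ∈ b, ∀ y ∈ b, x ∈ g → y ∈ g → x = y

structure IsDirectedTrade_s6 (k : ℕ) (G : Finset (Finset (Fin v)))
    (T T' : Multiset (List (Fin v))) : Prop where
  ne : T ≠ T'
  isDGDDBlock : ∀ b ∈ T', IsDGDDBlock k G b
  countP_eq : ∀ x y : Fin v,
    T'.countP (fun b => [x, y].Sublist b) = T.countP (fun b => [x, y].Sublist b)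

variable {k lam : ℕ} {G : Finset (Finset (Fin v))}

theorem IsDGDDBlock.perm {b b' : List (Fin v)} (hb : IsDGDDBlock k G b) (h : b.Perm b') :
    IsDGDDBlock k G b' :=
  ⟨h.length_eq ▸ hb.1, h.nodup_iff.mp hb.2.1,
    fun g hg x hx y hy => hb.2.2 g hg x (h.mem_iff.mpr hx) y (h.mem_iff.mpr hy)⟩

theorem IsDGDD.sub_add {B T T' : Multiset (List (Fin v))} (hB : IsDGDD v k lam G B) (hT : T ≤ B)
    (h : IsDirectedTrade_s6 k G T T') : IsDGDD v k lam G (B - T + T') := by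
  obtain ⟨hG, hblocks, hcount⟩ := hB
  refine ⟨hG, fun b hb => ?_, fun x y hxy => ?_⟩
  · rcases Multiset.mem_add.mp hb with hb | hb
    · exact hblocks b (Multiset.mem_of_le (Multiset.sub_le_self _ _) hb)
    · exact h.isDGDDBlock b hb
  · have := Multiset.countP_le_of_le (fun b => [x, y].Sublist b) hT
    rw [Multiset.countP_add, Multiset.countP_sub hT, h.countP_eq, ← hcount x y hxy]
    omega

theorem IsDGDDDefiningSet.exists_mem_of_isDirectedTrade {B S T T' : Multiset (List (Fin v))}
    (hS : IsDGDDDefiningSet v k lam G B S) (hB : IsDGDD v k lam G B) (hT : T ≤ B)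
    (h : IsDirectedTrade_s6 k G T T') : ∃ b ∈ S, b ∈ T := by
  by_contra! hST
  -- Otherwise `S` also lies in the DGDD `B - T + T'`, which differs from `B`.
  have hS' : S ≤ B - T + T' := by
    refine le_trans (Multiset.le_iff_count.mpr fun b => ?_) (Multiset.le_add_right _ _)
    rw [Multiset.count_sub]
    by_cases hb : b ∈ T
    · rw [Multiset.count_eq_zero.mpr fun hbS => hST b hbS hb]
      exact Nat.zero_le _
    · rw [Multiset.count_eq_zero.mpr hb, Nat.sub_zero]
      exact Multiset.le_iff_count.mp hS.1 b
  have hBT : B - T + T' = B - T + T :=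
    (hS.2 _ (hB.sub_add hT h) hS').trans (tsub_add_cancel_of_le hT).symm
  exact h.ne (add_left_cancel hBT).symm

theorem DGDDDefiningSetsAtLeastHalf.of_isDirectedTrade {ι : Type*} {s : Finset ι}
    {T : ι → Multiset (List (Fin v))} (hB : IsDGDD v k lam G (∑ i ∈ s, T i))
    (hnd : (∑ i ∈ s, T i).Nodup) (hcard : ∀ i ∈ s, Multiset.card (T i) ≤ 2)
    (htrade : ∀ i ∈ s, ∃ T', IsDirectedTrade_s6 k G (T i) T') :
    DGDDDefiningSetsAtLeastHalf v k lam G (∑ i ∈ s, T i) := fun _ hS =>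
  Multiset.card_sum_le_mul_card hnd hcard fun i hi =>
    let ⟨_, hT'⟩ := htrade i hi
    hS.exists_mem_of_isDirectedTrade hB (Finset.single_le_sum (fun _ _ => zero_le) hi) hT'

end Trades

section SwapTrade

variable {α : Type*}

theorem pair_sublist_cons_iff {a c x : α} {l : List α} :
    [a, c].Sublist (x :: l) ↔ (a = x ∧ c ∈ l) ∨ [a, c].Sublist l := by
  simp only [List.sublist_cons_iff, List.cons.injEq]
  aesop

theorem pair_sublist_append_pair_iff {a c x y : α} {u : List α} :
    [a, c].Sublist (u ++ [y, x]) ↔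
      (a = y ∧ c = x) ∨ (a ∈ u ∧ (c = x ∨ c = y)) ∨ [a, c].Sublist u := by
  rw [← List.reverse_sublist, ← List.reverse_sublist (l₁ := [a, c])]
  simp only [List.reverse_append, List.reverse_cons, List.reverse_nil, List.nil_append,
    List.cons_append, pair_sublist_cons_iff, List.mem_cons, List.mem_reverse]
  tauto

variable [DecidableEq α]

def swapTrade (x y : α) (t u : List α) : Multiset (List α) := {x :: y :: t, u ++ [y, x]}

theorem countP_swapTrade_comm {x y : α} {t u : List α} (hxy : x ≠ y) (hxt : x ∉ t) (hyt : y ∉ t)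
    (hxu : x ∉ u) (hyu : y ∉ u) (a c : α) :
    (swapTrade y x t u).countP (fun b => [a, c].Sublist b) =
      (swapTrade x y t u).countP (fun b => [a, c].Sublist b) := by
  have hat : [a, c].Sublist t → a ∈ t ∧ c ∈ t := fun h => ⟨h.subset (by simp), h.subset (by simp)⟩
  have hau : [a, c].Sublist u → a ∈ u ∧ c ∈ u := fun h => ⟨h.subset (by simp), h.subset (by simp)⟩
  simp only [swapTrade, Multiset.insert_eq_cons, Multiset.countP_cons, Multiset.countP_zero,
    ← Multiset.cons_zero, pair_sublist_cons_iff, pair_sublist_append_pair_iff, List.mem_cons]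
  split_ifs <;> grind

theorem isDirectedTrade_swapTrade {v k : ℕ} {G : Finset (Finset (Fin v))} {x y : Fin v}
    {t u : List (Fin v)} (hk : 3 ≤ k) (h₁ : IsDGDDBlock k G (x :: y :: t))
    (h₂ : IsDGDDBlock k G (u ++ [y, x])) :
    IsDirectedTrade_s6 k G (swapTrade x y t u) (swapTrade y x t u) := by
  have hnd₁ : (x :: y :: t).Nodup := h₁.2.1
  have hnd₂ : (u ++ [y, x]).Nodup := h₂.2.1
  obtain ⟨⟨hxy, hxt⟩, hyt, -⟩ : (x ≠ y ∧ x ∉ t) ∧ y ∉ t ∧ t.Nodup := by simpa using hnd₁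
  have hxu : x ∉ u := fun hx => List.disjoint_of_nodup_append hnd₂ hx (by simp)
  have hyu : y ∉ u := fun hy => List.disjoint_of_nodup_append hnd₂ hy (by simp)
  refine ⟨fun heq => ?_, fun b hb => ?_, countP_swapTrade_comm hxy hxt hyt hxu hyu⟩
  · have hmem : x :: y :: t ∈ swapTrade y x t u := heq ▸ by simp [swapTrade]
    simp only [swapTrade, Multiset.insert_eq_cons, Multiset.mem_cons, Multiset.mem_singleton,
      List.cons.injEq] at hmem
    rcases hmem with ⟨hyx, -⟩ | hu
    · exact hxy hyx
    · cases u with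
      | nil =>
        have hlen : (x :: y :: t).length = k := h₁.1
        simp only [List.nil_append, List.cons.injEq, true_and] at hu
        simp only [hu, List.length_cons, List.length_nil] at hlen
        omega
      | cons a u => simp_all
  · simp only [swapTrade, Multiset.insert_eq_cons, Multiset.mem_cons, Multiset.mem_singleton] at hb
    rcases hb with rfl | rfl
    · exact h₁.perm (List.Perm.swap y x t)
    · exact h₂.perm ((List.Perm.swap x y []).append_left u)

end SwapTrade

section GroupsOf

variable {v k lam : ℕ} {ι : Type*} [Fintype ι] [DecidableEq ι] (f : Fin v → ι)

def groupsOf : Finset (Finset (Fin v)) :=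
  Finset.univ.image fun i => Finset.univ.filter fun x => f x = i

variable {f}

theorem mem_groupsOf {g : Finset (Fin v)} :
    g ∈ groupsOf f ↔ ∃ i, Finset.univ.filter (fun x => f x = i) = g := by
  simp [groupsOf]

theorem existsUnique_mem_groupsOf (x : Fin v) : ∃! g, g ∈ groupsOf f ∧ x ∈ g := by
  refine ⟨Finset.univ.filter fun y => f y = f x, ⟨mem_groupsOf.mpr ⟨_, rfl⟩, by simp⟩, ?_⟩
  rintro _ ⟨hg, hx⟩
  obtain ⟨i, rfl⟩ := mem_groupsOf.mp hg
  simp_all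

theorem isDGDDBlock_groupsOf {b : List (Fin v)} (hlen : b.length = k) (hb : (b.map f).Nodup) :
    IsDGDDBlock k (groupsOf f) b := by
  refine ⟨hlen, hb.of_map f, fun g hg x hx y hy hxg hyg => ?_⟩
  obtain ⟨i, rfl⟩ := mem_groupsOf.mp hg
  simp only [Finset.mem_filter, Finset.mem_univ, true_and] at hxg hyg
  exact (List.nodup_map_iff_inj_on (hb.of_map f)).mp hb x hx y hy (hxg.trans hyg.symm)

theorem isDGDD_groupsOf {B : Multiset (List (Fin v))}
    (hblocks : ∀ b ∈ B, b.length = k ∧ (b.map f).Nodup)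
    (hcount : ∀ x y, f x ≠ f y → B.countP (fun b => [x, y].Sublist b) = lam) :
    IsDGDD v k lam (groupsOf f) B := by
  refine ⟨existsUnique_mem_groupsOf,
    fun b hb => isDGDDBlock_groupsOf (hblocks b hb).1 (hblocks b hb).2,
    fun x y hxy => hcount x y fun hfxy => hxy _ (mem_groupsOf.mpr ⟨f x, rfl⟩) ⟨?_, ?_⟩⟩ <;>
    simp [hfxy]

end GroupsOf

theorem SuperSimple.of_nodup {v : ℕ} {B : Multiset (List (Fin v))} (hB : B.Nodup)
    (h : ∀ b₁ ∈ B, ∀ b₂ ∈ B, b₁ ≠ b₂ → (b₁.toFinset ∩ b₂.toFinset).card ≤ 2) :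
    SuperSimple v B := by
  intro b₁ b₂ hle
  have hnd := Multiset.nodup_of_le hle hB
  have hmem := Multiset.subset_of_le hle
  refine h b₁ (hmem (by simp)) b₂ (hmem (by simp)) fun heq => ?_
  simp [heq] at hnd

namespace DGDD55

-- The point `5 * g + a` is the element `a` of `ℤ/5` in group `g`; `shift s` adds `s` to it.
abbrev Point := Fin 25

def groupIdx (x : Point) : Fin 5 := ⟨x / 5, by omega⟩

def shift (s : Fin 5) (x : Point) : Point := ⟨5 * (x / 5) + (x % 5 + s) % 5, by omega⟩

def baseTrade : Fin 10 → Point × Point × List Point × List Point := ![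
  (0, 6, [14, 19, 21], [22, 17, 10]),
  (0, 7, [11, 17, 20], [21, 15, 12]),
  (0, 8, [13, 15, 24], [20, 18, 14]),
  (0, 9, [10, 18, 23], [24, 16, 11]),
  (0, 5, [12, 16, 22], [23, 19, 13]),
  (0, 7, [13, 18, 22], [24, 19, 10]),
  (0, 8, [10, 16, 21], [23, 17, 12]),
  (0, 9, [12, 19, 20], [22, 15, 14]),
  (0, 5, [14, 17, 24], [21, 18, 11]),
  (0, 6, [11, 15, 23], [20, 16, 13])]

def trade (i : Fin 5 × Fin 10) : Multiset (List Point) :=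
  let (x, y, t, u) := baseTrade i.2
  swapTrade (shift i.1 x) (shift i.1 y) (t.map (shift i.1)) (u.map (shift i.1))

def blocks : Multiset (List Point) := ∑ i, trade i

theorem length_eq_and_nodup_map_of_mem_blocks :
    ∀ b ∈ blocks, b.length = 5 ∧ (b.map groupIdx).Nodup := by
  decide +kernel

theorem countP_blocks_eq_two : ∀ x y : Point, groupIdx x ≠ groupIdx y →
    blocks.countP (fun b => [x, y].Sublist b) = 2 := by
  decide +kernel

theorem nodup_blocks : blocks.Nodup := by
  decide +kernel

theorem card_inter_le_two_of_mem_blocks : ∀ b₁ ∈ blocks, ∀ b₂ ∈ blocks, b₁ ≠ b₂ →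
    (b₁.toFinset ∩ b₂.toFinset).card ≤ 2 := by
  decide +kernel

theorem map_card_groupsOf_groupIdx :
    (groupsOf groupIdx).val.map Finset.card = Multiset.replicate 5 5 := by
  decide +kernel

theorem isDGDD_blocks : IsDGDD 25 5 2 (groupsOf groupIdx) blocks :=
  isDGDD_groupsOf length_eq_and_nodup_map_of_mem_blocks countP_blocks_eq_two

theorem exists_isDirectedTrade_trade (i : Fin 5 × Fin 10) :
    ∃ T', IsDirectedTrade_s6 5 (groupsOf groupIdx) (trade i) T' := by
  have hblock : ∀ b ∈ trade i, IsDGDDBlock 5 (groupsOf groupIdx) b := fun b hb =>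
    isDGDD_blocks.2.1 b <| Multiset.mem_of_le
      (Finset.single_le_sum (fun _ _ => zero_le) (Finset.mem_univ i)) hb
  obtain ⟨x, y, t, u, htrade⟩ : ∃ x y t u, trade i = swapTrade x y t u := ⟨_, _, _, _, rfl⟩
  rw [htrade] at hblock ⊢
  exact ⟨_, isDirectedTrade_swapTrade (by norm_num) (hblock _ (by simp [swapTrade]))
    (hblock _ (by simp [swapTrade]))⟩

theorem definingSetsAtLeastHalf_blocks :
    DGDDDefiningSetsAtLeastHalf 25 5 2 (groupsOf groupIdx) blocks :=
  DGDDDefiningSetsAtLeastHalf.of_isDirectedTrade isDGDD_blocks nodup_blocks (fun _ _ => le_rfl)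
    fun i _ => exists_isDirectedTrade_trade i

end DGDD55

/-- There exists a super-simple `(5,2)`-DGDD of group type `5⁵`
(five groups each of size `5`) with `d ≥ 1/2`. -/
theorem exists_superSimple_DGDD_type_5_5 :
    ExistsSuperSimpleDGDDHalf 5 2 (Multiset.replicate 5 5) :=
  ⟨25, groupsOf DGDD55.groupIdx, DGDD55.blocks, DGDD55.isDGDD_blocks,
    SuperSimple.of_nodup DGDD55.nodup_blocks DGDD55.card_inter_le_two_of_mem_blocks,
    DGDD55.map_card_groupsOf_groupIdx, DGDD55.definingSetsAtLeastHalf_blocks⟩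
end
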